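/- arXiv:2208.05869 — 4 statements merged into one kernel-verified Lean document; each statement's English description precedes it below -/
import Mathlib

section
/- Every weakly l.f.g.u. strongly positive monoid is FF-atomic: if 𝓗 = (H, ≼) is a strongly positive monoid whose germ at every ≼-non-unit is f.g.u., then for every ≼-non-unit x the set of atomic ≼-factorizations of x, modulo ⊑_𝓗-equivalence, is finite and non-empty. -/
open Pointwise

namespace FactPaper

/-- `u` is a `≼`-unit for the preorder-like relation `r` on a monoid. -/
def RUnit {M : Type*} [Monoid M] (r : M → M → Prop) (u : M) : Prop :=
  r u 1 ∧ r 1 u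

/-- `u` is a `≼`-non-unit. -/
def RNonUnit {M : Type*} [Monoid M] (r : M → M → Prop) (u : M) : Prop :=
  ¬ RUnit r u

/-- The strict part `≺` of the relation `r`. -/
def RLt {M : Type*} (r : M → M → Prop) (x y : M) : Prop :=
  r x y ∧ ¬ r y x

/-- `a` is a `≼`-irreducible. -/
def RIrred {M : Type*} [Monoid M] (r : M → M → Prop) (a : M) : Prop :=
  RNonUnit r a ∧
    ∀ y z : M, RNonUnit r y → RNonUnit r z → RLt r y a → RLt r z a → a ≠ y * z

/-- `a` is a `≼`-atom. -/
def RAtom {M : Type*} [Monoid M] (r : M → M → Prop) (a : M) : Prop :=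
  RNonUnit r a ∧ ∀ y z : M, RNonUnit r y → RNonUnit r z → a ≠ y * z

/-- `a` is a `≼`-quark. -/
def RQuark {M : Type*} [Monoid M] (r : M → M → Prop) (a : M) : Prop :=
  RNonUnit r a ∧ ¬ ∃ b : M, RNonUnit r b ∧ RLt r b a

/-- The divisibility preorder: `Dvd2 x y` iff `y ∈ M x M`. -/
def Dvd2 {M : Type*} [Monoid M] (x y : M) : Prop :=
  ∃ u v : M, y = u * x * v

/-- The restriction of a relation on `M` to a submonoid `K`. -/
def SubRel {M : Type*} [Monoid M] (r : M → M → Prop) (K : Submonoid M) (a b : K) : Prop :=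
  r (a : M) (b : M)

/-- The preorder `⊑` on words induced by `r`: an injection of indices matching
`r`-equivalent letters. -/
def WordLe {M : Type*} (r : M → M → Prop) (l m : List M) : Prop :=
  ∃ σ : Fin l.length ↪ Fin m.length,
    ∀ i : Fin l.length, r (l.get i) (m.get (σ i)) ∧ r (m.get (σ i)) (l.get i)

/-- `⊑`-equivalence of words. -/
def WordEquiv {M : Type*} (r : M → M → Prop) (l m : List M) : Prop :=
  WordLe r l m ∧ WordLe r m l

/-- `l` is a `≼`-factorization of `x`: a word of `≼`-irreducibles with product `x`. -/
def IsFac {M : Type*} [Monoid M] (r : M → M → Prop) (x : M) (l : List M) : Prop :=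
  (∀ a ∈ l, RIrred r a) ∧ l.prod = x

/-- `l` is a minimal `≼`-factorization of `x`: a `⊑`-minimal `≼`-factorization. -/
def IsMinFac {M : Type*} [Monoid M] (r : M → M → Prop) (x : M) (l : List M) : Prop :=
  IsFac r x l ∧ ∀ m : List M, IsFac r x m → WordLe r m l → WordLe r l m

/-- `l` is an atomic `≼`-factorization of `x`. -/
def IsAtomicFac {M : Type*} [Monoid M] (r : M → M → Prop) (x : M) (l : List M) : Prop :=
  (∀ a ∈ l, RAtom r a) ∧ l.prod = x

/-- `l` is a minimal atomic `≼`-factorization of `x`. -/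
def IsMinAtomicFac {M : Type*} [Monoid M] (r : M → M → Prop) (x : M) (l : List M) : Prop :=
  IsMinFac r x l ∧ ∀ a ∈ l, RAtom r a

/-- Every `≼`-non-unit is a non-empty product of `≼`-irreducibles. -/
def Factorable {M : Type*} [Monoid M] (r : M → M → Prop) : Prop :=
  ∀ x : M, RNonUnit r x →
    ∃ l : List M, l ≠ [] ∧ (∀ a ∈ l, RIrred r a) ∧ l.prod = x

/-- Every `≼`-non-unit is a non-empty product of `≼`-atoms. -/
def Atomic {M : Type*} [Monoid M] (r : M → M → Prop) : Prop :=
  ∀ x : M, RNonUnit r x →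
    ∃ l : List M, l ≠ [] ∧ (∀ a ∈ l, RAtom r a) ∧ l.prod = x

/-- The premonoid `(M, r)` is finitely generated up to units. -/
def IsFGU {M : Type*} [Monoid M] (r : M → M → Prop) : Prop :=
  ∃ A : Set M, A.Finite ∧
    Submonoid.closure
      {w : M | ∃ u a v : M, RUnit r u ∧ a ∈ A ∧ RUnit r v ∧ w = u * a * v} = ⊤

/-- The submonoid generated by the `∣_M`-divisors of `x` (ground monoid of the germ of a
premonoid at `x`). -/
def GermSub {M : Type*} [Monoid M] (x : M) : Submonoid M :=
  Submonoid.closure {y : M | Dvd2 y x}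

/-- Membership in the smallest divisor-closed submonoid containing `x`. -/
inductive InDC {M : Type*} [Monoid M] (x : M) : M → Prop
  | base : InDC x x
  | one : InDC x 1
  | mul {a b : M} : InDC x a → InDC x b → InDC x (a * b)
  | dvd {a b : M} : InDC x b → Dvd2 a b → InDC x a

/-- The smallest divisor-closed submonoid of `M` containing `x`. -/
def DCSub {M : Type*} [Monoid M] (x : M) : Submonoid M where
  carrier := {y : M | InDC x y}
  mul_mem' := fun ha hb => InDC.mul ha hb
  one_mem' := InDC.one

/-- `(M, r)` is a weakly positive monoid. -/
def WeaklyPositive {M : Type*} [Monoid M] (r : M → M → Prop) : Prop :=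
  (∀ x u v : M, RUnit r u → RUnit r v → r (u * x * v) x) ∧
    (∀ x a b : M, r x (a * x * b))

/-- `(M, r)` is locally of finite type (loft). -/
def IsLoft {M : Type*} [Monoid M] (r : M → M → Prop) : Prop :=
  ∀ x : M, RNonUnit r x →
    ∃ A : Set M, A.Finite ∧ A ⊆ {a : M | RIrred r a} ∧
      ∀ l : List M, IsFac r x l →
        ∃ m : List M, (∀ a ∈ m, a ∈ A) ∧ WordEquiv r l m

/-- `(M, r)` is BF-factorable. -/
def IsBFFactorable {M : Type*} [Monoid M] (r : M → M → Prop) : Prop :=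
  ∀ x : M, RNonUnit r x →
    {n : ℕ | ∃ l : List M, IsFac r x l ∧ l.length = n}.Finite ∧
      {n : ℕ | ∃ l : List M, IsFac r x l ∧ l.length = n}.Nonempty

/-- `(M, r)` is BmF-factorable. -/
def IsBmFFactorable {M : Type*} [Monoid M] (r : M → M → Prop) : Prop :=
  ∀ x : M, RNonUnit r x →
    {n : ℕ | ∃ l : List M, IsMinFac r x l ∧ l.length = n}.Finite ∧
      {n : ℕ | ∃ l : List M, IsMinFac r x l ∧ l.length = n}.Nonempty

/-- `(M, r)` is FF-factorable: modulo `⊑`-equivalence, every `≼`-non-unit has finitely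
many (and at least one) `≼`-factorizations. -/
def IsFFFactorable {M : Type*} [Monoid M] (r : M → M → Prop) : Prop :=
  ∀ x : M, RNonUnit r x →
    (∃ l : List M, IsFac r x l) ∧
      ∃ F : Set (List M), F.Finite ∧
        ∀ l : List M, IsFac r x l → ∃ m ∈ F, IsFac r x m ∧ WordEquiv r l m

/-- `(M, r)` is FmF-factorable. -/
def IsFmFFactorable {M : Type*} [Monoid M] (r : M → M → Prop) : Prop :=
  ∀ x : M, RNonUnit r x →
    (∃ l : List M, IsMinFac r x l) ∧
      ∃ F : Set (List M), F.Finite ∧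
        ∀ l : List M, IsMinFac r x l → ∃ m ∈ F, IsMinFac r x m ∧ WordEquiv r l m

/-- `(M, r)` is FF-atomic. -/
def IsFFAtomic {M : Type*} [Monoid M] (r : M → M → Prop) : Prop :=
  ∀ x : M, RNonUnit r x →
    (∃ l : List M, IsAtomicFac r x l) ∧
      ∃ F : Set (List M), F.Finite ∧
        ∀ l : List M, IsAtomicFac r x l → ∃ m ∈ F, IsAtomicFac r x m ∧ WordEquiv r l m

/-- `(M, r)` is FmF-atomic. -/
def IsFmFAtomic {M : Type*} [Monoid M] (r : M → M → Prop) : Prop :=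
  ∀ x : M, RNonUnit r x →
    (∃ l : List M, IsMinAtomicFac r x l) ∧
      ∃ F : Set (List M), F.Finite ∧
        ∀ l : List M, IsMinAtomicFac r x l → ∃ m ∈ F, IsMinAtomicFac r x m ∧ WordEquiv r l m

/-!
In a strongly positive monoid a word of `≼`-non-units is strictly `≺`-above each of its proper
subwords. Hence, for a finite alphabet `A` of non-units, the words over `A` whose product is
`≼`-equivalent to `x` form an antichain for the subword order, and Higman's lemma makes this set
finite. When the germ at `x` is f.g.u., its generators that are non-units give such an alphabet:
every divisor of `x` is a product of `≼`-units and of elements `≼`-equivalent to letters of `A`.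
Consequently every divisor is equivalent to a word over `A`, which bounds the length of the
factorizations of `x` into non-units, so that a longest one is atomic; and every atom dividing
`x` is equivalent to a single letter of `A`, so that atomic factorizations of `x` are, letter by
letter, equivalent to words in the finite set above.
-/

section Words

open List

variable {α β : Type*}

theorem forall₂_trans {R : α → α → Prop} (hR : ∀ a b c, R a b → R b c → R a c)
    {l₁ l₂ l₃ : List α} (h₁ : Forall₂ R l₁ l₂) (h₂ : Forall₂ R l₂ l₃) : Forall₂ R l₁ l₃ := by
  induction h₁ generalizing l₃ with
  | nil => exact h₂
  | cons hab _ ih => cases h₂ with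
    | cons hbc h => exact .cons (hR _ _ _ hab hbc) (ih h)

theorem forall₂_antisymmRel_symm {r : α → α → Prop} {l m : List α}
    (h : Forall₂ (AntisymmRel r) l m) : Forall₂ (AntisymmRel r) m l :=
  Forall₂.flip (h.imp fun _ _ h => h.symm)

theorem wordLe_of_forall₂ {r : α → α → Prop} {l m : List α}
    (h : Forall₂ (AntisymmRel r) l m) : WordLe r l m :=
  ⟨(finCongr h.length_eq).toEmbedding, fun i => h.get i.2 (h.length_eq ▸ i.2)⟩

theorem wordEquiv_of_forall₂ {r : α → α → Prop} {l m : List α}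
    (h : Forall₂ (AntisymmRel r) l m) : WordEquiv r l m :=
  ⟨wordLe_of_forall₂ h, wordLe_of_forall₂ (forall₂_antisymmRel_symm h)⟩

theorem exists_finite_transversal {P : Set α} {S : Set β} (hS : S.Finite) {R : α → β → Prop}
    (h : ∀ a ∈ P, ∃ b ∈ S, R a b) :
    ∃ F ⊆ P, F.Finite ∧ ∀ a ∈ P, ∃ a' ∈ F, ∃ b, R a b ∧ R a' b := by
  let T := {b | b ∈ S ∧ ∃ a ∈ P, R a b}
  have : Finite T := (hS.subset fun _ hb => hb.1).to_subtype
  choose g hgP hgR using fun b : T => b.2.2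
  refine ⟨Set.range g, Set.range_subset_iff.2 hgP, Set.finite_range g, fun a ha => ?_⟩
  obtain ⟨b, hbS, hab⟩ := h a ha
  exact ⟨g ⟨b, hbS, a, ha, hab⟩, Set.mem_range_self _, b, hab, hgR _⟩

end Words

section Monoid

open List

variable {H : Type*} [Monoid H]

structure IsPreorderedMonoid (r : H → H → Prop) : Prop where
  refl : ∀ x : H, r x x
  trans : ∀ {x y z : H}, r x y → r y z → r x z
  mul_le_mul : ∀ x y u v : H, r x y → r (u * x * v) (u * y * v)

structure IsPositiveMonoid (r : H → H → Prop) : Prop extends IsPreorderedMonoid r where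
  one_le : ∀ x : H, r 1 x

structure IsStronglyPositiveMonoid (r : H → H → Prop) : Prop extends IsPositiveMonoid r where
  mul_lt_mul : ∀ x y u v : H, RLt r x y → RLt r (u * x * v) (u * y * v)

def FactorsUpToUnits (r : H → H → Prop) (A : Set H) (y : H) : Prop :=
  ∃ L : List H, L.prod = y ∧ ∀ g ∈ L, r g 1 ∨ ∃ a ∈ A, AntisymmRel r g a

theorem dvd2_prod_of_mem {l : List H} {y : H} (hy : y ∈ l) : Dvd2 y l.prod := by
  obtain ⟨s, t, rfl⟩ := List.append_of_mem hy
  exact ⟨s.prod, t.prod, by rw [List.prod_append, List.prod_cons, mul_assoc]⟩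

theorem exists_isAtomicFac_of_length_le {r : H → H → Prop} {x : H} (hx : RNonUnit r x) {N : ℕ}
    (hN : ∀ l : List H, (∀ y ∈ l, RNonUnit r y) → l.prod = x → l.length ≤ N) :
    ∃ l, IsAtomicFac r x l := by
  classical
  let P : ℕ → Prop := fun n => ∃ l : List H, (∀ y ∈ l, RNonUnit r y) ∧ l.prod = x ∧ l.length = n
  have hPN : ∀ n, P n → n ≤ N := by
    rintro n ⟨l, hl, hlx, rfl⟩
    exact hN l hl hlx
  have hP1 : P 1 := ⟨[x], by simpa using hx, by simp, rfl⟩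
  obtain ⟨l, hl, hlx, hlen⟩ : P (Nat.findGreatest P N) := Nat.findGreatest_spec (hPN 1 hP1) hP1
  refine ⟨l, fun y hy => ⟨hl y hy, fun v w hv hw hyvw => ?_⟩, hlx⟩
  obtain ⟨s, t, rfl⟩ := List.append_of_mem hy
  have hlonger : P (Nat.findGreatest P N + 1) := by
    refine ⟨s ++ v :: w :: t, fun z hz => ?_, ?_, ?_⟩
    · simp only [List.mem_append, List.mem_cons] at hz
      rcases hz with hz | rfl | rfl | hz
      exacts [hl z (by simp [hz]), hv, hw, hl z (by simp [hz])]
    · simp [← hlx, hyvw, mul_assoc]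
    · simp only [List.length_append, List.length_cons] at hlen ⊢
      omega
  have := Nat.le_findGreatest (hPN _ hlonger) hlonger
  omega

namespace IsPreorderedMonoid

variable {r : H → H → Prop}

theorem antisymmRel_refl (hr : IsPreorderedMonoid r) (a : H) : AntisymmRel r a a :=
  ⟨hr.refl a, hr.refl a⟩

theorem antisymmRel_trans (hr : IsPreorderedMonoid r) {a b c : H} (h₁ : AntisymmRel r a b)
    (h₂ : AntisymmRel r b c) : AntisymmRel r a c :=
  ⟨hr.trans h₁.1 h₂.1, hr.trans h₂.2 h₁.2⟩

theorem mul_le_mul' (hr : IsPreorderedMonoid r) {a b c d : H} (h₁ : r a b) (h₂ : r c d) :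
    r (a * c) (b * d) := by
  have h₁' := hr.mul_le_mul a b 1 c h₁
  have h₂' := hr.mul_le_mul c d b 1 h₂
  simp only [one_mul, mul_one] at h₁' h₂'
  exact hr.trans h₁' h₂'

theorem antisymmRel_mul (hr : IsPreorderedMonoid r) {a b c d : H} (h₁ : AntisymmRel r a b)
    (h₂ : AntisymmRel r c d) : AntisymmRel r (a * c) (b * d) :=
  ⟨hr.mul_le_mul' h₁.1 h₂.1, hr.mul_le_mul' h₁.2 h₂.2⟩

theorem prod_antisymmRel_prod (hr : IsPreorderedMonoid r) {l m : List H}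
    (h : Forall₂ (AntisymmRel r) l m) : AntisymmRel r l.prod m.prod := by
  induction h with
  | nil => exact hr.antisymmRel_refl 1
  | cons hab _ ih =>
    rw [List.prod_cons, List.prod_cons]
    exact hr.antisymmRel_mul hab ih

theorem exists_longer_word_antisymmRel_prod (hr : IsPreorderedMonoid r) {A : Set H} {l : List H}
    (hl : ∀ y ∈ l, ¬ r y 1 ∧ ∃ w : List H, (∀ b ∈ w, b ∈ A) ∧ AntisymmRel r y w.prod) :
    ∃ W : List H, (∀ b ∈ W, b ∈ A) ∧ AntisymmRel r l.prod W.prod ∧ l.length ≤ W.length := by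
  induction l with
  | nil => exact ⟨[], by simp, hr.antisymmRel_refl 1, le_rfl⟩
  | cons y t ih =>
    obtain ⟨W, hWA, hW, hlen⟩ := ih fun z hz => hl z (List.mem_cons_of_mem y hz)
    obtain ⟨hy1, w, hwA, hw⟩ := hl y List.mem_cons_self
    have hw0 : w ≠ [] := by
      rintro rfl
      exact hy1 hw.1
    refine ⟨w ++ W, ?_, ?_, ?_⟩
    · simp only [List.mem_append]
      rintro b (hb | hb)
      exacts [hwA b hb, hWA b hb]
    · rw [List.prod_cons, List.prod_append]
      exact hr.antisymmRel_mul hw hW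
    · have := List.length_pos_iff.2 hw0
      simp only [List.length_cons, List.length_append]
      omega

end IsPreorderedMonoid

namespace IsPositiveMonoid

variable {r : H → H → Prop}

theorem rNonUnit_iff (hr : IsPositiveMonoid r) {u : H} : RNonUnit r u ↔ ¬ r u 1 :=
  ⟨fun h h1 => h ⟨h1, hr.one_le u⟩, fun h hu => h hu.1⟩

theorem le_mul_left (hr : IsPositiveMonoid r) (u z : H) : r z (u * z) := by
  simpa using hr.mul_le_mul' (hr.one_le u) (hr.refl z)

theorem antisymmRel_mul_mul (hr : IsPositiveMonoid r) {u v : H} (hu : r u 1) (hv : r v 1)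
    (a : H) : AntisymmRel r (u * a * v) a := by
  have h₁ := hr.mul_le_mul' (hr.mul_le_mul' hu (hr.refl a)) hv
  have h₂ := hr.mul_le_mul' (hr.mul_le_mul' (hr.one_le u) (hr.refl a)) (hr.one_le v)
  simp only [one_mul, mul_one] at h₁ h₂
  exact ⟨h₁, h₂⟩

theorem antisymmRel_mul_left_of_le_one (hr : IsPositiveMonoid r) {u : H} (hu : r u 1)
    (z : H) : AntisymmRel r (u * z) z := by
  simpa using hr.antisymmRel_mul_mul hu (hr.refl 1) z

theorem antisymmRel_mul_right_of_le_one (hr : IsPositiveMonoid r) {v : H} (hv : r v 1)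
    (z : H) : AntisymmRel r (z * v) z := by
  simpa using hr.antisymmRel_mul_mul (hr.refl 1) hv z

theorem prod_le_prod_of_sublist (hr : IsPositiveMonoid r) {w w' : List H} (h : w <+ w') :
    r w.prod w'.prod := by
  induction h with
  | slnil => exact hr.refl 1
  | cons a _ ih =>
    rw [List.prod_cons]
    exact hr.trans ih (hr.le_mul_left a _)
  | cons_cons a _ ih =>
    rw [List.prod_cons, List.prod_cons]
    exact hr.mul_le_mul' (hr.refl a) ih

theorem exists_mem_antisymmRel_of_rAtom (hr : IsPositiveMonoid r) {L : List H}
    (hL : RAtom r L.prod) : ∃ g ∈ L, AntisymmRel r L.prod g := by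
  induction L with
  | nil => exact absurd ⟨hr.refl 1, hr.refl 1⟩ hL.1
  | cons g t ih =>
    rw [List.prod_cons] at hL ⊢
    by_cases ht : r t.prod 1
    · exact ⟨g, List.mem_cons_self, hr.antisymmRel_mul_right_of_le_one ht g⟩
    have hg : r g 1 := by
      by_contra hg
      exact hL.2 g t.prod (hr.rNonUnit_iff.2 hg) (hr.rNonUnit_iff.2 ht) rfl
    have ht' : RAtom r t.prod := by
      refine ⟨hr.rNonUnit_iff.2 ht, fun v w hv hw hvw => hL.2 (g * v) w ?_ hw ?_⟩
      · exact hr.rNonUnit_iff.2 fun h => hr.rNonUnit_iff.1 hv (hr.trans (hr.le_mul_left g v) h)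
      · rw [hvw, mul_assoc]
    obtain ⟨g', hg', htg'⟩ := ih ht'
    exact ⟨g', List.mem_cons_of_mem g hg',
      hr.antisymmRel_trans (hr.antisymmRel_mul_left_of_le_one hg t.prod) htg'⟩

theorem exists_factorsUpToUnits_of_isFGU_germ (hr : IsPositiveMonoid r) {x : H}
    (h : IsFGU (SubRel r (GermSub x))) :
    ∃ A : Set H, A.Finite ∧ (∀ a ∈ A, ¬ r a 1) ∧ ∀ y, Dvd2 y x → FactorsUpToUnits r A y := by
  obtain ⟨A, hAfin, hgen⟩ := h
  refine ⟨{a | a ∈ Subtype.val '' A ∧ ¬ r a 1}, (hAfin.image _).subset fun _ h => h.1,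
    fun _ h => h.2, fun y hy => ?_⟩
  obtain ⟨L, hL, hLy⟩ := Submonoid.exists_list_of_mem_closure
    (hgen ▸ Submonoid.mem_top (⟨y, Submonoid.subset_closure hy⟩ : GermSub x))
  refine ⟨L.map Subtype.val, by rw [← Submonoid.coe_list_prod, hLy], ?_⟩
  simp only [List.mem_map]
  rintro _ ⟨_, hg, rfl⟩
  obtain ⟨u, a, v, hu, ha, hv, rfl⟩ := hL _ hg
  have huav := hr.antisymmRel_mul_mul hu.1 hv.1 (a : H)
  by_cases ha1 : r (a : H) 1
  · exact .inl (hr.trans huav.1 ha1)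
  · exact .inr ⟨a, ⟨⟨a, ha, rfl⟩, ha1⟩, huav⟩

end IsPositiveMonoid

namespace FactorsUpToUnits

variable {r : H → H → Prop} {A : Set H} {y : H}

theorem exists_word_antisymmRel (h : FactorsUpToUnits r A y) (hr : IsPositiveMonoid r) :
    ∃ w : List H, (∀ b ∈ w, b ∈ A) ∧ AntisymmRel r y w.prod := by
  obtain ⟨L, rfl, hL⟩ := h
  induction L with
  | nil => exact ⟨[], by simp, hr.antisymmRel_refl 1⟩
  | cons g t ih =>
    obtain ⟨w, hwA, hw⟩ := ih fun g hg => hL g (List.mem_cons_of_mem _ hg)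
    rw [List.prod_cons]
    rcases hL g List.mem_cons_self with hg | ⟨a, ha, hga⟩
    · exact ⟨w, hwA, hr.antisymmRel_trans (hr.antisymmRel_mul_left_of_le_one hg t.prod) hw⟩
    · refine ⟨a :: w, ?_, by simpa using hr.antisymmRel_mul hga hw⟩
      simp only [List.mem_cons]
      rintro b (rfl | hb)
      exacts [ha, hwA b hb]

theorem exists_antisymmRel_of_rAtom (h : FactorsUpToUnits r A y) (hr : IsPositiveMonoid r)
    (hy : RAtom r y) : ∃ a ∈ A, AntisymmRel r y a := by
  obtain ⟨L, rfl, hL⟩ := h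
  obtain ⟨g, hg, hyg⟩ := hr.exists_mem_antisymmRel_of_rAtom hy
  rcases hL g hg with hg1 | ⟨a, ha, hga⟩
  · exact absurd (hr.trans hyg.1 hg1) (hr.rNonUnit_iff.1 hy.1)
  · exact ⟨a, ha, hr.antisymmRel_trans hyg hga⟩

end FactorsUpToUnits

namespace IsStronglyPositiveMonoid

variable {r : H → H → Prop}

theorem prod_lt_prod_of_sublist (hr : IsStronglyPositiveMonoid r) {w w' : List H}
    (h : w <+ w') (hne : w ≠ w') (hw' : ∀ b ∈ w', ¬ r b 1) : RLt r w.prod w'.prod := by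
  induction h with
  | slnil => exact absurd rfl hne
  | @cons l₁ l₂ a h _ =>
    have hlt : RLt r l₂.prod (a * l₂.prod) := by
      simpa using hr.mul_lt_mul 1 a 1 l₂.prod ⟨hr.one_le a, hw' a List.mem_cons_self⟩
    rw [List.prod_cons]
    exact ⟨hr.trans (hr.prod_le_prod_of_sublist h) hlt.1,
      fun h' => hlt.2 (hr.trans h' (hr.prod_le_prod_of_sublist h))⟩
  | cons_cons a _ ih =>
    have := ih (fun h => hne (h ▸ rfl)) fun b hb => hw' b (List.mem_cons_of_mem a hb)
    simpa using hr.mul_lt_mul _ _ a 1 this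

theorem finite_setOf_antisymmRel_prod (hr : IsStronglyPositiveMonoid r) {A : Set H}
    (hA : A.Finite) (hA1 : ∀ a ∈ A, ¬ r a 1) (x : H) :
    {w : List H | (∀ b ∈ w, b ∈ A) ∧ AntisymmRel r w.prod x}.Finite := by
  have hpwo := Set.PartiallyWellOrderedOn.partiallyWellOrderedOn_sublistForall₂ (· = ·)
    (hA.partiallyWellOrderedOn (r := (· = ·)))
  refine IsAntichain.finite_of_partiallyWellOrderedOn ?_ (hpwo.mono fun w hw => hw.1)
  rintro w hw w' hw' hne hsub
  obtain ⟨_, hl, hsub⟩ := List.sublistForall₂_iff.1 hsub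
  rw [List.forall₂_eq_eq_eq] at hl
  subst hl
  exact (hr.prod_lt_prod_of_sublist hsub hne fun b hb => hA1 b (hw'.1 b hb)).2
    (hr.trans hw'.2.1 hw.2.2)

theorem exists_isAtomicFac (hr : IsStronglyPositiveMonoid r) {x : H} (hx : RNonUnit r x)
    {A : Set H} (hA : A.Finite) (hA1 : ∀ a ∈ A, ¬ r a 1)
    (hfac : ∀ y, Dvd2 y x → FactorsUpToUnits r A y) : ∃ l, IsAtomicFac r x l := by
  obtain ⟨N, hN⟩ := ((hr.finite_setOf_antisymmRel_prod hA hA1 x).image List.length).bddAbove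
  refine exists_isAtomicFac_of_length_le (N := N) hx fun l hl hlx => ?_
  obtain ⟨W, hWA, hW, hlen⟩ := hr.exists_longer_word_antisymmRel_prod (A := A) fun y hy =>
    ⟨hr.rNonUnit_iff.1 (hl y hy),
      (hfac y (hlx ▸ dvd2_prod_of_mem hy)).exists_word_antisymmRel hr.toIsPositiveMonoid⟩
  exact hlen.trans (hN ⟨W, ⟨hWA, hlx ▸ hW.symm⟩, rfl⟩)

theorem exists_finite_isAtomicFac_representatives (hr : IsStronglyPositiveMonoid r) {x : H}
    {A : Set H} (hA : A.Finite) (hA1 : ∀ a ∈ A, ¬ r a 1)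
    (hfac : ∀ y, Dvd2 y x → FactorsUpToUnits r A y) :
    ∃ F : Set (List H), F.Finite ∧
      ∀ l, IsAtomicFac r x l → ∃ m ∈ F, IsAtomicFac r x m ∧ WordEquiv r l m := by
  have hrep : ∀ l ∈ {l | IsAtomicFac r x l},
      ∃ w ∈ {w : List H | (∀ b ∈ w, b ∈ A) ∧ AntisymmRel r w.prod x},
        Forall₂ (AntisymmRel r) l w := by
    rintro l ⟨hl, rfl⟩
    choose! ρ hρA hρ using fun y hy => (hfac y (dvd2_prod_of_mem hy)).exists_antisymmRel_of_rAtom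
      hr.toIsPositiveMonoid (hl y hy)
    have hlρ : Forall₂ (AntisymmRel r) l (l.map ρ) :=
      List.forall₂_map_right_iff.2 (List.forall₂_same.2 hρ)
    refine ⟨l.map ρ, ⟨?_, (hr.prod_antisymmRel_prod hlρ).symm⟩, hlρ⟩
    simp only [List.mem_map]
    rintro _ ⟨y, hy, rfl⟩
    exact hρA y hy
  obtain ⟨F, hFP, hF, hFrep⟩ :=
    exists_finite_transversal (hr.finite_setOf_antisymmRel_prod hA hA1 x) hrep
  refine ⟨F, hF, fun l hl => ?_⟩
  obtain ⟨m, hm, w, hlw, hmw⟩ := hFrep l hl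
  have hlm : Forall₂ (AntisymmRel r) l m :=
    forall₂_trans (R := AntisymmRel r) (fun _ _ _ => hr.antisymmRel_trans) hlw
      (forall₂_antisymmRel_symm hmw)
  exact ⟨m, hm, hFP hm, wordEquiv_of_forall₂ hlm⟩

end IsStronglyPositiveMonoid

end Monoid

/-- Corollary 4.13. Every weakly l.f.g.u. strongly positive monoid is
FF-atomic: if `(H, ≼)` is a preordered monoid whose strict part is compatible with
multiplication, with `1 ≼ x` for all `x`, and whose germ at every `≼`-non-unit is
f.g.u., then for every `≼`-non-unit `x` the set of atomic `≼`-factorizations of `x`,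
modulo `⊑`-equivalence, is finite and non-empty. -/
theorem stmt13 {H : Type*} [Monoid H] (r : H → H → Prop)
    (hrefl : Reflexive r) (htrans : Transitive r)
    (hmul : ∀ x y u v : H, r x y → r (u * x * v) (u * y * v))
    (hsmul : ∀ x y u v : H, RLt r x y → RLt r (u * x * v) (u * y * v))
    (hpos : ∀ x : H, r 1 x)
    (hwlfgu : ∀ x : H, RNonUnit r x → IsFGU (SubRel r (GermSub x))) :
    IsFFAtomic r := by
  have hr : IsStronglyPositiveMonoid r := ⟨⟨⟨hrefl, fun h₁ h₂ => htrans h₁ h₂, hmul⟩, hpos⟩, hsmul⟩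
  intro x hx
  obtain ⟨A, hA, hA1, hfac⟩ := hr.exists_factorsUpToUnits_of_isFGU_germ (hwlfgu x hx)
  exact ⟨hr.exists_isAtomicFac hx hA hA1 hfac,
    hr.exists_finite_isAtomicFac_representatives hA hA1 hfac⟩

end FactPaper
end

section
/- Every Dedekind-finite weakly l.f.g.u. monoid H is factorable (every ∣_H-non-unit is a non-empty product of irreducibles of the premonoid (H, ∣_H)). If, in addition, every irreducible of (H, ∣_H) is an ordinary atom of H (a non-unit that is not a product of two non-units), then H is FmF-atomic. -/
open Pointwise

namespace FactPaper

/-!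
In a Dedekind-finite monoid the `∣_H`-units are the ordinary units, so a weakly l.f.g.u. germ at
`x` supplies a finite set `A` such that every divisor of `x` is a product of two-sided associates
of elements of `A`. Factorability then follows by well-founded induction along `≺` on the finite
set `A`: a non-irreducible divisor `b` of `x` splits into two strictly smaller factors, and each of
them is a product of associates of elements of `A` strictly below `b`.

For FmF-atomicity, every atom dividing `x` is associated to an element of `A`. Counting the letters
of a factorization of `x` in each of these finitely many classes, `𝔞 ⊑ 𝔟` becomes the pointwise
order of the counting vectors, and the counting vectors of minimal factorizations form an
antichain of `ℕ^A`, which is finite by Dickson's lemma.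
-/

section Relation

variable {α : Type*} {r : α → α → Prop}

instance [IsPreorder α r] : IsStrictOrder α (RLt r) where
  irrefl _ h := h.2 h.1
  trans _ _ _ hab hbc := ⟨_root_.trans hab.1 hbc.1, fun hca => hbc.2 (_root_.trans hca hab.1)⟩

theorem rLt_of_rel_of_rLt [IsTrans α r] {a b c : α} (hab : r a b) (hbc : RLt r b c) :
    RLt r a c :=
  ⟨_root_.trans hab hbc.1, fun hca => hbc.2 (_root_.trans hca hab)⟩

theorem rLt_congr [IsTrans α r] {a a' b b' : α} (ha : AntisymmRel r a a')
    (hb : AntisymmRel r b b') : RLt r a b ↔ RLt r a' b' := by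
  have key : ∀ {a a' b b' : α}, AntisymmRel r a a' → AntisymmRel r b b' →
      RLt r a b → RLt r a' b' := fun ha hb h =>
    ⟨_root_.trans (_root_.trans ha.2 h.1) hb.1,
      fun h' => h.2 (_root_.trans (_root_.trans hb.1 h') ha.2)⟩
  exact ⟨key ha hb, key ha.symm hb.symm⟩

theorem rUnit_congr [Monoid α] [IsTrans α r] {a b : α} (h : AntisymmRel r a b) :
    RUnit r a ↔ RUnit r b :=
  ⟨fun ha => ⟨_root_.trans h.2 ha.1, _root_.trans ha.2 h.1⟩,
    fun hb => ⟨_root_.trans h.1 hb.1, _root_.trans hb.2 h.2⟩⟩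

theorem WordLe.length_le {l m : List α} (h : WordLe r l m) : l.length ≤ m.length := by
  simpa using Fintype.card_le_of_embedding h.choose

theorem WordLe.symm_of_length_le {l m : List α} (h : WordLe r l m)
    (hlen : m.length ≤ l.length) : WordLe r m l := by
  have hlm : l.length = m.length := le_antisymm h.length_le hlen
  obtain ⟨σ, hσ⟩ := h
  have hbij : Function.Bijective σ :=
    (Fintype.bijective_iff_injective_and_card σ).2 ⟨σ.injective, by simpa using hlm⟩
  let e := Equiv.ofBijective σ hbij
  refine ⟨e.symm.toEmbedding, fun i => ?_⟩
  have := hσ (e.symm i)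
  rw [show σ (e.symm i) = i from e.apply_symm_apply i] at this
  exact this.symm

theorem exists_isMinFac [Monoid α] {x : α} (h : ∃ l, IsFac r x l) : ∃ l, IsMinFac r x l := by
  obtain ⟨l, hl, hmin⟩ := (measure List.length).wf.has_min {l | IsFac r x l} h
  exact ⟨l, hl, fun m hm hml => hml.symm_of_length_le (not_lt.1 (hmin m hm))⟩

theorem exists_embedding_comp_eq_iff_card_fiber_le {β γ δ : Type*} [Finite β] [Finite γ]
    (f : β → δ) (g : γ → δ) :
    (∃ σ : β ↪ γ, ∀ b, g (σ b) = f b) ↔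
      ∀ d, Nat.card {b // f b = d} ≤ Nat.card {c // g c = d} := by
  constructor
  · rintro ⟨σ, hσ⟩ d
    exact Finite.card_le_of_embedding (σ.subtypeMap fun b hb => (hσ b).trans hb)
  · intro h
    have e : ∀ d, {b // f b = d} ↪ {c // g c = d} := fun d => by
      have := Fintype.ofFinite {b // f b = d}
      have := Fintype.ofFinite {c // g c = d}
      exact (Function.Embedding.nonempty_of_card_le
        (by simpa only [Nat.card_eq_fintype_card] using h d)).some
    exact ⟨(Equiv.sigmaFiberEquiv f).symm.toEmbedding.trans
      ((Function.Embedding.sigmaMap (.refl δ) e).trans (Equiv.sigmaFiberEquiv g).toEmbedding),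
      fun b => (e (f b) ⟨b, rfl⟩).2⟩

noncomputable def classCount (r : α → α → Prop) [IsPreorder α r] (l : List α)
    (c : Antisymmetrization α r) : ℕ :=
  Nat.card {i : Fin l.length // toAntisymmetrization r (l.get i) = c}

theorem wordLe_iff_classCount_le [IsPreorder α r] {l m : List α} :
    WordLe r l m ↔ classCount r l ≤ classCount r m := by
  rw [Pi.le_def]
  unfold classCount
  rw [← exists_embedding_comp_eq_iff_card_fiber_le]
  exact exists_congr fun σ => forall_congr' fun i => (Quotient.eq.trans and_comm).symm

theorem exists_finite_subset_forall_wordEquiv [IsPreorder α r] {L : Set (List α)}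
    {T : Set α} (hT : T.Finite) (hletters : ∀ l ∈ L, ∀ b ∈ l, ∃ a ∈ T, AntisymmRel r b a)
    (hmin : ∀ l ∈ L, ∀ m ∈ L, WordLe r l m → WordLe r m l) :
    ∃ F ⊆ L, F.Finite ∧ ∀ l ∈ L, ∃ m ∈ F, WordEquiv r l m := by
  set K := toAntisymmetrization r '' T
  have : Finite K := (hT.image _).to_subtype
  let Φ : List α → K → ℕ := fun l c => classCount r l c
  have hzero : ∀ l ∈ L, ∀ c ∉ K, classCount r l c = 0 := by
    refine fun l hl c hc => @Nat.card_of_isEmpty _ ⟨fun ⟨i, hi⟩ => hc ?_⟩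
    obtain ⟨a, ha, hia⟩ := hletters l hl _ (List.get_mem l i)
    exact ⟨a, ha, hi ▸ Quotient.sound hia.symm⟩
  have hΦ : ∀ l ∈ L, ∀ m, Φ l ≤ Φ m → WordLe r l m := by
    refine fun l hl m hlm => wordLe_iff_classCount_le.2 fun c => ?_
    by_cases hc : c ∈ K
    · exact hlm ⟨c, hc⟩
    · simp [hzero l hl c hc]
  have hanti : IsAntichain (· ≤ ·) (Φ '' L) := by
    rintro _ ⟨l, hl, rfl⟩ _ ⟨m, hm, rfl⟩ hne hlm
    exact hne (le_antisymm hlm fun c =>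
      wordLe_iff_classCount_le.1 (hmin l hl m hm (hΦ l hl m hlm)) c)
  obtain ⟨F, hFL, hF⟩ := Set.exists_subset_bijOn L Φ
  refine ⟨F, hFL, Set.Finite.of_finite_image ?_ hF.injOn, fun l hl => ?_⟩
  · exact hF.image_eq ▸ WellQuasiOrderedLE.finite_of_isAntichain hanti
  · obtain ⟨m, hm, hml⟩ := hF.surjOn ⟨l, hl, rfl⟩
    exact ⟨m, hm, hΦ l hl m hml.ge, hΦ m (hFL hm) l hml.le⟩

end Relation

theorem isDedekindFiniteMonoid_of_not_isUnit_mul {M : Type*} [Monoid M]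
    (h : ∀ x y : M, ¬ IsUnit x → ¬ IsUnit y → ¬ IsUnit (x * y)) : IsDedekindFiniteMonoid M where
  mul_eq_one_symm {a b} hab := by
    by_cases ha : IsUnit a
    · obtain ⟨U, rfl⟩ := ha
      rw [← Units.inv_eq_of_mul_eq_one_right hab, Units.inv_mul]
    · have hb : IsUnit b := by_contra fun hb => h a b ha hb (hab ▸ isUnit_one)
      obtain ⟨V, rfl⟩ := hb
      rw [← Units.inv_eq_of_mul_eq_one_left hab, Units.mul_inv]

section Dvd2

variable {M : Type*} [Monoid M]

theorem dvd2_refl (a : M) : Dvd2 a a := ⟨1, 1, by simp⟩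

theorem dvd2_trans {a b c : M} (hab : Dvd2 a b) (hbc : Dvd2 b c) : Dvd2 a c := by
  obtain ⟨u, v, rfl⟩ := hab
  obtain ⟨p, q, rfl⟩ := hbc
  exact ⟨p * u, v * q, by simp only [mul_assoc]⟩

instance : IsPreorder M Dvd2 where
  refl := dvd2_refl
  trans _ _ _ := dvd2_trans

theorem dvd2_mul_left (a b : M) : Dvd2 b (a * b) := ⟨a, 1, (mul_one _).symm⟩

theorem dvd2_mul_right (a b : M) : Dvd2 a (a * b) := ⟨1, b, by rw [one_mul]⟩

theorem dvd2_prod_of_mem_s14 {l : List M} {a : M} (ha : a ∈ l) : Dvd2 a l.prod := by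
  obtain ⟨s, t, rfl⟩ := List.append_of_mem ha
  exact ⟨s.prod, t.prod, by simp [List.prod_append, mul_assoc]⟩

theorem antisymmRel_dvd2_mul_mul {u v : M} (hu : IsUnit u) (hv : IsUnit v) (a : M) :
    AntisymmRel Dvd2 (u * a * v) a := by
  obtain ⟨U, rfl⟩ := hu
  obtain ⟨V, rfl⟩ := hv
  exact ⟨⟨↑U⁻¹, ↑V⁻¹, by simp [mul_assoc]⟩, ⟨U, V, rfl⟩⟩

theorem rUnit_dvd2_iff [IsDedekindFiniteMonoid M] {u : M} : RUnit Dvd2 u ↔ IsUnit u := by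
  refine ⟨fun ⟨⟨p, q, h⟩, _⟩ => ?_, fun hu => ?_⟩
  · have : IsUnit (p * u * q) := h ▸ isUnit_one
    simp only [IsUnit.mul_iff] at this
    exact this.1.2
  · have := antisymmRel_dvd2_mul_mul hu isUnit_one 1
    rwa [mul_one, mul_one] at this

theorem rNonUnit_dvd2_iff [IsDedekindFiniteMonoid M] {u : M} : RNonUnit Dvd2 u ↔ ¬ IsUnit u :=
  rUnit_dvd2_iff.not

theorem rAtom_dvd2_iff [IsDedekindFiniteMonoid M] {a : M} :
    RAtom Dvd2 a ↔ ¬ IsUnit a ∧ ∀ y z : M, ¬ IsUnit y → ¬ IsUnit z → a ≠ y * z := by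
  simp only [RAtom, rNonUnit_dvd2_iff]

theorem RIrred.isUnit_mul_mul {a u v : M} (ha : RIrred Dvd2 a) (hu : IsUnit u) (hv : IsUnit v) :
    RIrred Dvd2 (u * a * v) := by
  have e := antisymmRel_dvd2_mul_mul hu hv a
  refine ⟨fun h => ha.1 ((rUnit_congr e).1 h), fun y z hy hz hya hza hyz => ?_⟩
  obtain ⟨U, rfl⟩ := hu
  obtain ⟨V, rfl⟩ := hv
  have ey : AntisymmRel Dvd2 (↑U⁻¹ * y) y := by
    simpa using antisymmRel_dvd2_mul_mul U⁻¹.isUnit isUnit_one y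
  have ez : AntisymmRel Dvd2 (z * ↑V⁻¹) z := by
    simpa using antisymmRel_dvd2_mul_mul isUnit_one V⁻¹.isUnit z
  refine ha.2 _ _ (fun h => hy ((rUnit_congr ey).1 h)) (fun h => hz ((rUnit_congr ez).1 h))
    ((rLt_congr ey e.symm).2 hya) ((rLt_congr ez e.symm).2 hza) ?_
  calc a = ↑U⁻¹ * (↑U * a * ↑V) * ↑V⁻¹ := by simp [mul_assoc]
    _ = ↑U⁻¹ * y * (z * ↑V⁻¹) := by rw [hyz]; simp only [mul_assoc]

def HasFactorization (r : M → M → Prop) (x : M) : Prop :=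
  ∃ l : List M, l ≠ [] ∧ (∀ a ∈ l, RIrred r a) ∧ l.prod = x

theorem HasFactorization.of_rIrred {r : M → M → Prop} {a : M} (ha : RIrred r a) :
    HasFactorization r a :=
  ⟨[a], List.cons_ne_nil _ _, by simpa using ha, List.prod_singleton⟩

theorem HasFactorization.mul {r : M → M → Prop} {x y : M} (hx : HasFactorization r x)
    (hy : HasFactorization r y) : HasFactorization r (x * y) := by
  obtain ⟨l, hl, hlirr, rfl⟩ := hx
  obtain ⟨m, -, hmirr, rfl⟩ := hy
  exact ⟨l ++ m, by simp [hl], List.forall_mem_append.2 ⟨hlirr, hmirr⟩, List.prod_append⟩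

theorem HasFactorization.isUnit_mul {u x : M} (hu : IsUnit u) (hx : HasFactorization Dvd2 x) :
    HasFactorization Dvd2 (u * x) := by
  obtain ⟨l, hl, hirr, rfl⟩ := hx
  obtain ⟨a, t, rfl⟩ := List.exists_cons_of_ne_nil hl
  rw [List.forall_mem_cons] at hirr
  exact ⟨(u * a * 1) :: t, List.cons_ne_nil _ _,
    List.forall_mem_cons.2 ⟨hirr.1.isUnit_mul_mul hu isUnit_one, hirr.2⟩, by simp [mul_assoc]⟩

theorem HasFactorization.mul_isUnit {x v : M} (hv : IsUnit v) (hx : HasFactorization Dvd2 x) :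
    HasFactorization Dvd2 (x * v) := by
  obtain ⟨l, hl, hirr, rfl⟩ := hx
  refine ⟨l.dropLast ++ [1 * l.getLast hl * v], by simp, List.forall_mem_append.2
    ⟨fun a ha => hirr a (List.mem_of_mem_dropLast ha), ?_⟩, ?_⟩
  · simpa using (hirr _ (List.getLast_mem hl)).isUnit_mul_mul isUnit_one hv
  · conv_rhs => rw [← List.dropLast_append_getLast hl]
    simp [List.prod_append, mul_assoc]

theorem isUnit_or_hasFactorization_mul {x y : M} (hx : IsUnit x ∨ HasFactorization Dvd2 x)
    (hy : IsUnit y ∨ HasFactorization Dvd2 y) :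
    IsUnit (x * y) ∨ HasFactorization Dvd2 (x * y) := by
  rcases hx with hx | hx <;> rcases hy with hy | hy
  · exact .inl (hx.mul hy)
  · exact .inr (hy.isUnit_mul hx)
  · exact .inr (hx.mul_isUnit hy)
  · exact .inr (hx.mul hy)

def twoSidedAssociates (A : Set M) : Set M :=
  {g | ∃ u a v : M, IsUnit u ∧ a ∈ A ∧ IsUnit v ∧ g = u * a * v}

theorem isUnit_or_hasFactorization_of_mem_closure {A : Set M} {b : M}
    (ih : ∀ a ∈ A, RLt Dvd2 a b → ¬ IsUnit a → HasFactorization Dvd2 a) {w : M}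
    (hw : w ∈ Submonoid.closure (twoSidedAssociates A)) (hwb : RLt Dvd2 w b) :
    IsUnit w ∨ HasFactorization Dvd2 w := by
  induction hw using Submonoid.closure_induction with
  | mem _ hg =>
    obtain ⟨u, a, v, hu, ha, hv, rfl⟩ := hg
    have hab : RLt Dvd2 a b := (rLt_congr (antisymmRel_dvd2_mul_mul hu hv a) .rfl).1 hwb
    by_cases hau : IsUnit a
    · exact .inl ((hu.mul hau).mul hv)
    · exact isUnit_or_hasFactorization_mul
        (isUnit_or_hasFactorization_mul (.inl hu) (.inr (ih a ha hab hau))) (.inl hv)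
  | one => exact .inl isUnit_one
  | mul g h _ _ ihg ihh =>
    exact isUnit_or_hasFactorization_mul (ihg (rLt_of_rel_of_rLt (dvd2_mul_right g h) hwb))
      (ihh (rLt_of_rel_of_rLt (dvd2_mul_left g h) hwb))

theorem hasFactorization_of_forall_rLt [IsDedekindFiniteMonoid M] {A : Set M} {b : M}
    (hb : ¬ IsUnit b) (hcl : ∀ w, RLt Dvd2 w b → w ∈ Submonoid.closure (twoSidedAssociates A))
    (ih : ∀ a ∈ A, RLt Dvd2 a b → ¬ IsUnit a → HasFactorization Dvd2 a) :
    HasFactorization Dvd2 b := by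
  by_cases hirr : RIrred Dvd2 b
  · exact .of_rIrred hirr
  obtain ⟨y, hy, z, hz, hyb, hzb, rfl⟩ : ∃ y, ¬ IsUnit y ∧ ∃ z, ¬ IsUnit z ∧
      RLt Dvd2 y b ∧ RLt Dvd2 z b ∧ b = y * z := by
    simpa [RIrred, rNonUnit_dvd2_iff, hb] using hirr
  have hfac : ∀ w, RLt Dvd2 w (y * z) → ¬ IsUnit w → HasFactorization Dvd2 w := fun w hwb hw =>
    (isUnit_or_hasFactorization_of_mem_closure ih (hcl w hwb) hwb).resolve_left hw
  exact (hfac y hyb hy).mul (hfac z hzb hz)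

end Dvd2

section DedekindFinite

variable {M : Type*} [Monoid M] [IsDedekindFiniteMonoid M]

theorem exists_finite_forall_dvd2_mem_closure {x : M} (h : IsFGU (SubRel Dvd2 (GermSub x))) :
    ∃ A : Set M, A.Finite ∧ ∀ w, Dvd2 w x → w ∈ Submonoid.closure (twoSidedAssociates A) := by
  obtain ⟨A₀, hA₀, htop⟩ := h
  refine ⟨(↑) '' A₀, hA₀.image _, fun w hw => ?_⟩
  have hw' : (⟨w, Submonoid.subset_closure hw⟩ : GermSub x) ∈ Submonoid.closure _ :=
    htop ▸ Submonoid.mem_top _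
  have := Submonoid.mem_map_of_mem (GermSub x).subtype hw'
  rw [MonoidHom.map_mclosure] at this
  refine Submonoid.closure_mono ?_ this
  rintro _ ⟨_, ⟨u, a, v, hu, ha, hv, rfl⟩, rfl⟩
  exact ⟨u, a, v, rUnit_dvd2_iff.1 hu, Set.mem_image_of_mem _ ha, rUnit_dvd2_iff.1 hv, rfl⟩

theorem hasFactorization_of_isFGU_germ {x : M} (hx : ¬ IsUnit x)
    (h : IsFGU (SubRel Dvd2 (GermSub x))) : HasFactorization Dvd2 x := by
  obtain ⟨A, hA, hcl⟩ := exists_finite_forall_dvd2_mem_closure h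
  have hcl' : ∀ {b}, Dvd2 b x → ∀ w, RLt Dvd2 w b → w ∈ Submonoid.closure (twoSidedAssociates A) :=
    fun hb w hw => hcl w (dvd2_trans hw.1 hb)
  have hA' : ∀ a ∈ A, Dvd2 a x → ¬ IsUnit a → HasFactorization Dvd2 a := fun a ha =>
    (hA.wellFoundedOn (r := RLt Dvd2)).induction ha
      (P := fun a => Dvd2 a x → ¬ IsUnit a → HasFactorization Dvd2 a) fun a _ ih hax hau =>
      hasFactorization_of_forall_rLt hau (hcl' hax) fun c hc hca hcu =>
        ih c hc hca (dvd2_trans hca.1 hax) hcu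
  exact hasFactorization_of_forall_rLt hx (hcl' (dvd2_refl x)) fun a ha hax hau =>
    hA' a ha hax.1 hau

theorem exists_antisymmRel_of_rAtom_of_mem_closure {A : Set M} {b : M}
    (hb : b ∈ Submonoid.closure (twoSidedAssociates A)) (hatom : RAtom Dvd2 b) :
    ∃ a ∈ A, AntisymmRel Dvd2 b a := by
  suffices ∀ g ∈ Submonoid.closure (twoSidedAssociates A), IsUnit g ∨
      (∃ y z, ¬ IsUnit y ∧ ¬ IsUnit z ∧ g = y * z) ∨ ∃ a ∈ A, AntisymmRel Dvd2 g a by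
    rw [rAtom_dvd2_iff] at hatom
    rcases this b hb with h | ⟨y, z, hy, hz, h⟩ | h
    exacts [absurd h hatom.1, absurd h (hatom.2 y z hy hz), h]
  intro g hg
  induction hg using Submonoid.closure_induction with
  | mem _ hg =>
    obtain ⟨u, a, v, hu, ha, hv, rfl⟩ := hg
    exact .inr (.inr ⟨a, ha, antisymmRel_dvd2_mul_mul hu hv a⟩)
  | one => exact .inl isUnit_one
  | mul g h _ _ ihg ihh =>
    by_cases hg : IsUnit g
    · rcases ihh with hh | ⟨y, z, hy, hz, rfl⟩ | ⟨a, ha, hha⟩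
      · exact .inl (hg.mul hh)
      · exact .inr (.inl ⟨g * y, z, by simp [hy], hz, (mul_assoc _ _ _).symm⟩)
      · have e : AntisymmRel Dvd2 (g * h) h := by
          simpa using antisymmRel_dvd2_mul_mul hg isUnit_one h
        exact .inr (.inr ⟨a, ha, e.trans hha⟩)
    by_cases hh : IsUnit h
    · rcases ihg with hg' | ⟨y, z, hy, hz, rfl⟩ | ⟨a, ha, hga⟩
      · exact absurd hg' hg
      · exact .inr (.inl ⟨y, z * h, hy, by simp [hz], mul_assoc _ _ _⟩)
      · have e : AntisymmRel Dvd2 (g * h) g := by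
          simpa using antisymmRel_dvd2_mul_mul isUnit_one hh g
        exact .inr (.inr ⟨a, ha, e.trans hga⟩)
    · exact .inr (.inl ⟨g, h, hg, hh, rfl⟩)

theorem factorable_dvd2_of_isFGU_germ
    (h : ∀ x : M, RNonUnit Dvd2 x → IsFGU (SubRel Dvd2 (GermSub x))) :
    Factorable (Dvd2 : M → M → Prop) := fun x hx =>
  hasFactorization_of_isFGU_germ (rNonUnit_dvd2_iff.1 hx) (h x hx)

theorem isFmFAtomic_dvd2_of_isFGU_germ
    (h : ∀ x : M, RNonUnit Dvd2 x → IsFGU (SubRel Dvd2 (GermSub x)))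
    (hirr : ∀ a : M, RIrred Dvd2 a → RAtom Dvd2 a) :
    IsFmFAtomic (Dvd2 : M → M → Prop) := by
  intro x hx
  obtain ⟨A, hA, hcl⟩ := exists_finite_forall_dvd2_mem_closure (h x hx)
  obtain ⟨l, hl, hlirr, hlx⟩ := factorable_dvd2_of_isFGU_germ h x hx
  obtain ⟨l, hl⟩ := exists_isMinFac ⟨l, hlirr, hlx⟩
  obtain ⟨F, hFL, hF, hrep⟩ := exists_finite_subset_forall_wordEquiv
    (L := {l | IsMinAtomicFac Dvd2 x l}) hA
    (fun l hl b hb => exists_antisymmRel_of_rAtom_of_mem_closure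
      (hcl b (hl.1.1.2 ▸ dvd2_prod_of_mem_s14 hb)) (hl.2 b hb))
    (fun l hl m hm hlm => hm.1.2 l hl.1.1 hlm)
  refine ⟨⟨l, hl, fun a ha => hirr a (hl.1.1 a ha)⟩, F, hF, fun l hl => ?_⟩
  obtain ⟨m, hm, hlm⟩ := hrep l hl
  exact ⟨m, hm, hFL hm, hlm⟩

end DedekindFinite

/-- Theorem 5.1. Every Dedekind-finite weakly l.f.g.u. monoid `H` is
factorable (w.r.t. the divisibility preorder `∣_H`). If, moreover, every irreducible of
`(H, ∣_H)` is an ordinary atom of `H` (a non-unit that is not a product of two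
non-units), then `H` is FmF-atomic. -/
theorem stmt14 {H : Type*} [Monoid H]
    (hdf : ∀ x y : H, ¬ IsUnit x → ¬ IsUnit y → ¬ IsUnit (x * y))
    (hwlfgu : ∀ x : H, RNonUnit (Dvd2 : H → H → Prop) x →
      IsFGU (SubRel (Dvd2 : H → H → Prop) (GermSub x))) :
    Factorable (Dvd2 : H → H → Prop) ∧
    ((∀ a : H, RIrred (Dvd2 : H → H → Prop) a →
        ¬ IsUnit a ∧ ∀ y z : H, ¬ IsUnit y → ¬ IsUnit z → a ≠ y * z) →
      IsFmFAtomic (Dvd2 : H → H → Prop)) := by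
  have := isDedekindFiniteMonoid_of_not_isUnit_mul hdf
  exact ⟨factorable_dvd2_of_isFGU_germ hwlfgu, fun hirr =>
    isFmFAtomic_dvd2_of_isFGU_germ hwlfgu fun a ha => rAtom_dvd2_iff.2 (hirr a ha)⟩

end FactPaper
end

section
/- Let H be a left duo monoid. Then for all x₁, …, xₙ ∈ H and every strictly increasing function σ : {1, …, m} → {1, …, n}, one has Hx₁H · Hx₂H ⋯ HxₙH ⊆ H·(x_{σ(1)} x_{σ(2)} ⋯ x_{σ(m)}). -/
open Pointwise

namespace FactPaper

/-! Left duo means `aH ⊆ Ha`. Hence `HaH ⊆ Ha` and `Ha · Hb = H(aH)b ⊆ Hab`, so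
`Hx₁H ⋯ HxₙH ⊆ H(x₁ ⋯ xₙ)`. Deleting a letter from a word `w` only enlarges `Hw`: `Hav ⊆ Hv`
trivially, and if `u ∈ Hv` then `au ∈ aHv ⊆ Hav`. -/

open Set

theorem _root_.List.ofFn_comp_sublist_of_strictMono {α : Type*} {m n : ℕ} (x : Fin n → α)
    {σ : Fin m → Fin n} (hσ : StrictMono σ) : (List.ofFn (x ∘ σ)).Sublist (List.ofFn x) := by
  have hσ_sub : (List.ofFn σ).Sublist (List.finRange n) :=
    List.sublist_of_subperm_of_sortedLE
      ((List.nodup_ofFn.2 hσ.injective).subperm fun i _ => List.mem_finRange i)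
      hσ.sortedLT_ofFn.sortedLE (List.sortedLT_finRange n).sortedLE
  simpa only [List.map_ofFn, ← List.ofFn_id, Function.comp_id] using hσ_sub.map x

section LeftDuo

variable {H : Type*} [Monoid H]

theorem singleton_mul_univ_subset (hduo : ∀ a b : H, ∃ c, a * b = c * a) (a : H) :
    {a} * univ ⊆ (univ : Set H) * {a} := by
  rw [singleton_mul]
  rintro _ ⟨b, -, rfl⟩
  obtain ⟨c, hc⟩ := hduo a b
  exact ⟨c, mem_univ c, a, rfl, hc.symm⟩

theorem univ_mul_singleton_mul_univ_subset (hduo : ∀ a b : H, ∃ c, a * b = c * a) (a : H) :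
    univ * {a} * univ ⊆ (univ : Set H) * {a} :=
  calc (univ : Set H) * {a} * univ = univ * ({a} * univ) := (mul_assoc _ _ _)
    _ ⊆ (univ * (univ * {a}) : Set H) :=
      Set.mul_subset_mul_left (singleton_mul_univ_subset hduo a)
    _ = (univ * {a} : Set H) := by rw [← mul_assoc, univ_mul_univ]

theorem univ_mul_singleton_mul_univ_mul_singleton_subset
    (hduo : ∀ a b : H, ∃ c, a * b = c * a) (a b : H) :
    (univ : Set H) * {a} * (univ * {b}) ⊆ univ * {a * b} :=
  calc (univ : Set H) * {a} * (univ * {b}) = univ * ({a} * univ) * {b} := by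
        simp only [mul_assoc]
    _ ⊆ (univ * (univ * {a}) * {b} : Set H) :=
      Set.mul_subset_mul_right (Set.mul_subset_mul_left (singleton_mul_univ_subset hduo a))
    _ = (univ * {a * b} : Set H) := by
      rw [← mul_assoc, univ_mul_univ, mul_assoc, singleton_mul_singleton]

theorem prod_map_univ_mul_singleton_mul_univ_subset (hduo : ∀ a b : H, ∃ c, a * b = c * a)
    (l : List H) : (l.map fun a => (univ : Set H) * {a} * univ).prod ⊆ univ * {l.prod} := by
  induction l with
  | nil => simp
  | cons a l ih =>
    rw [List.map_cons, List.prod_cons, List.prod_cons]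
    exact (Set.mul_subset_mul (univ_mul_singleton_mul_univ_subset hduo a) ih).trans
      (univ_mul_singleton_mul_univ_mul_singleton_subset hduo a l.prod)

theorem univ_mul_singleton_prod_subset_of_sublist (hduo : ∀ a b : H, ∃ c, a * b = c * a)
    {l l' : List H} (h : l'.Sublist l) : (univ : Set H) * {l.prod} ⊆ univ * {l'.prod} := by
  induction h with
  | slnil => rfl
  | @cons l₁ l₂ a _ ih =>
    calc (univ : Set H) * {a * l₂.prod} = univ * {a} * {l₂.prod} := by
          rw [mul_assoc, singleton_mul_singleton]
      _ ⊆ (univ * {l₂.prod} : Set H) := Set.mul_subset_mul_right (subset_univ _)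
      _ ⊆ (univ * {l₁.prod} : Set H) := ih
  | @cons_cons l₁ l₂ a _ ih =>
    calc (univ : Set H) * {a * l₂.prod} = univ * ({a} * {l₂.prod}) := by
          rw [singleton_mul_singleton]
      _ ⊆ (univ * ({a} * (univ * {l₁.prod})) : Set H) :=
          Set.mul_subset_mul_left (Set.mul_subset_mul_left
            ((Set.subset_mul_right _ (mem_univ 1)).trans ih))
      _ = (univ * {a} * (univ * {l₁.prod}) : Set H) := (mul_assoc _ _ _).symm
      _ ⊆ (univ * {a * l₁.prod} : Set H) :=
          univ_mul_singleton_mul_univ_mul_singleton_subset hduo a l₁.prod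

end LeftDuo

/-- Lemma 5.5. If `H` is a left duo monoid, then for all
`x₁, …, xₙ ∈ H` and every strictly increasing `σ : Fin m → Fin n`, one has
`Hx₁H ⋯ HxₙH ⊆ H · (x_{σ 0} ⋯ x_{σ (m-1)})`. -/
theorem stmt17 {H : Type*} [Monoid H]
    (hduo : ∀ a b : H, ∃ c : H, a * b = c * a)
    {n m : ℕ} (x : Fin n → H) (σ : Fin m → Fin n) (hσ : StrictMono σ) :
    (List.ofFn fun i : Fin n =>
        ((Set.univ : Set H) * {x i} * (Set.univ : Set H))).prod ⊆
      (Set.univ : Set H) * {(List.ofFn fun j : Fin m => x (σ j)).prod} :=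
  calc (List.ofFn fun i => (univ : Set H) * {x i} * univ).prod
      = ((List.ofFn x).map fun a => (univ : Set H) * {a} * univ).prod := by
        rw [List.map_ofFn]; rfl
    _ ⊆ (univ * {(List.ofFn x).prod} : Set H) :=
      prod_map_univ_mul_singleton_mul_univ_subset hduo _
    _ ⊆ (univ * {(List.ofFn (x ∘ σ)).prod} : Set H) :=
      univ_mul_singleton_prod_subset_of_sublist hduo (List.ofFn_comp_sublist_of_strictMono x hσ)

end FactPaper
end

section
/- In a left duo, l.f.g.u. monoid H, every non-unit (element not in the group H^× of invertible elements) factors as a non-empty product of irreducibles of the premonoid (H, ∣_H). -/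
open Pointwise

namespace FactPaper

/-!
In a left duo monoid `x ∣_H y` just means `y ∈ H x`, so divisibility is compatible with
multiplication and a product of a word divides the product of any word containing it as a
subword up to `∣_H`. If `⟦x⟧_H` is generated by the elements `u a v` with `u, v` units and `a`
in a finite set `A`, each generator is `∣_H`-equivalent to an element of `A`; Higman's lemma then
makes `∣_H` a well-quasi-order on `⟦x⟧_H`. Since `⟦x⟧_H` contains every divisor of `x`, strict
divisibility is well founded, and a non-unit that is not irreducible splits into two strictly
smaller non-units, which factor by well-founded induction.
-/

theorem _root_.Set.Finite.partiallyWellOrderedOn_setOf_equiv {α : Type*} {r : α → α → Prop}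
    [IsTrans α r] {A : Set α} (hA : A.Finite) :
    {y | ∃ a ∈ A, r y a ∧ r a y}.PartiallyWellOrderedOn r := by
  refine Set.partiallyWellOrderedOn_iff_exists_lt.2 fun f hf => ?_
  choose a haA hfa haf using hf
  obtain ⟨m, n, hmn, ha_eq⟩ := Set.Finite.exists_lt_map_eq_of_forall_mem haA hA
  exact ⟨m, n, hmn, _root_.trans (hfa m) (ha_eq ▸ haf n)⟩

theorem factorable_of_wellFounded {M : Type*} [Monoid M] {r : M → M → Prop}
    (hwf : WellFounded (RLt r)) : Factorable r := by
  intro x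
  induction x using hwf.induction with
  | _ x ih =>
    intro hx
    by_cases hirr : RIrred r x
    · exact ⟨[x], by simp, by simpa using hirr, by simp⟩
    obtain ⟨y, z, hy, hz, hyx, hzx, rfl⟩ : ∃ y z : M, RNonUnit r y ∧ RNonUnit r z ∧
        RLt r y x ∧ RLt r z x ∧ x = y * z := by
      by_contra! h
      exact hirr ⟨hx, h⟩
    obtain ⟨ly, hly, hlyirr, rfl⟩ := ih y hyx hy
    obtain ⟨lz, -, hlzirr, rfl⟩ := ih z hzx hz
    refine ⟨ly ++ lz, by simp [hly], fun a ha => ?_, List.prod_append⟩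
    exact (List.mem_append.1 ha).elim (hlyirr a) (hlzirr a)

section Divisibility

variable {H : Type*} [Monoid H]

theorem dvd2_refl_s19 (x : H) : Dvd2 x x := ⟨1, 1, by simp⟩

theorem dvd2_trans_s19 {x y z : H} (h : Dvd2 x y) (h' : Dvd2 y z) : Dvd2 x z := by
  obtain ⟨u, v, rfl⟩ := h
  obtain ⟨s, t, rfl⟩ := h'
  exact ⟨s * u, v * t, by simp [mul_assoc]⟩

instance : IsPreorder H (Dvd2 : H → H → Prop) where
  refl := dvd2_refl_s19
  trans _ _ _ := dvd2_trans_s19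

theorem dvd2_one_left (x : H) : Dvd2 1 x := ⟨x, 1, by simp⟩

theorem dvd2_mul_left_s19 (a x : H) : Dvd2 x (a * x) := ⟨a, 1, by simp⟩

theorem not_rlt_dvd2_of_runit {x : H} (hx : RUnit Dvd2 x) (y : H) : ¬ RLt Dvd2 y x :=
  fun h => h.2 (dvd2_trans_s19 hx.1 (dvd2_one_left y))

theorem wellFounded_rlt_dvd2
    (h : ∀ x : H, RNonUnit Dvd2 x → (DCSub x : Set H).PartiallyWellOrderedOn Dvd2) :
    WellFounded (RLt (Dvd2 : H → H → Prop)) := by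
  refine ⟨fun x => ?_⟩
  by_cases hx : RUnit Dvd2 x
  · exact ⟨x, fun y hy => (not_rlt_dvd2_of_runit hx y hy).elim⟩
  refine (Set.WellFoundedOn.acc_iff_wellFoundedOn.out 0 2).2
    ((h x hx).wellFoundedOn.subset fun y hy => ?_)
  have hyx : Relation.TransGen Dvd2 y x := Relation.TransGen.mono (fun _ _ h => h.1) _ _ hy
  rw [Relation.transGen_eq_self] at hyx
  exact InDC.dvd InDC.base hyx

end Divisibility

def IsLeftDuo (H : Type*) [Monoid H] : Prop :=
  ∀ a b : H, ∃ c : H, a * b = c * a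

namespace IsLeftDuo

variable {H : Type*} [Monoid H]

theorem exists_eq_mul_of_dvd2 (hH : IsLeftDuo H) {y x : H} (h : Dvd2 y x) :
    ∃ c : H, x = c * y := by
  obtain ⟨u, v, rfl⟩ := h
  obtain ⟨c, hc⟩ := hH y v
  exact ⟨u * c, by rw [mul_assoc, hc, ← mul_assoc]⟩

theorem isUnit_of_mul_eq_one (hH : IsLeftDuo H) {s z : H} (h : s * z = 1) : IsUnit z := by
  obtain ⟨c, hc⟩ := hH s z
  have hcs : c * s = 1 := by rw [← hc, h]
  have hzc : z = c := by
    calc z = c * s * z := by rw [hcs, one_mul]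
      _ = c := by rw [mul_assoc, h, mul_one]
  exact ⟨⟨z, s, by rw [hzc, hcs], h⟩, rfl⟩

theorem isUnit_of_dvd2_one (hH : IsLeftDuo H) {z : H} (h : Dvd2 z 1) : IsUnit z := by
  obtain ⟨c, hc⟩ := hH.exists_eq_mul_of_dvd2 h
  exact hH.isUnit_of_mul_eq_one hc.symm

theorem dvd2_mul (hH : IsLeftDuo H) {a a' b b' : H} (ha : Dvd2 a a') (hb : Dvd2 b b') :
    Dvd2 (a * b) (a' * b') := by
  obtain ⟨s, rfl⟩ := hH.exists_eq_mul_of_dvd2 ha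
  obtain ⟨t, rfl⟩ := hH.exists_eq_mul_of_dvd2 hb
  obtain ⟨c, hc⟩ := hH a t
  exact ⟨s * c, 1, by rw [mul_one, mul_assoc, ← mul_assoc a, hc]; simp only [mul_assoc]⟩

theorem dvd2_mul_mul_of_runit (hH : IsLeftDuo H) {u v : H} (hu : RUnit Dvd2 u)
    (hv : RUnit Dvd2 v) (a : H) : Dvd2 (u * a * v) a := by
  simpa using hH.dvd2_mul (hH.dvd2_mul hu.1 (dvd2_refl_s19 a)) hv.1

theorem dvd2_prod_of_sublistForall₂ (hH : IsLeftDuo H) {l l' : List H}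
    (h : List.SublistForall₂ Dvd2 l l') : Dvd2 l.prod l'.prod := by
  induction h with
  | nil => exact dvd2_one_left _
  | cons hab _ ih => exact hH.dvd2_mul hab ih
  | cons_right _ ih => exact dvd2_trans_s19 ih (dvd2_mul_left_s19 _ _)

theorem partiallyWellOrderedOn_of_isFGU (hH : IsLeftDuo H) {K : Submonoid H}
    (hK : IsFGU (SubRel Dvd2 K)) : (K : Set H).PartiallyWellOrderedOn Dvd2 := by
  obtain ⟨A, hA, hgen⟩ := hK
  set S : Set H := {y | ∃ a ∈ ((↑) : K → H) '' A, Dvd2 y a ∧ Dvd2 a y}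
  have hS : S.PartiallyWellOrderedOn Dvd2 := (hA.image _).partiallyWellOrderedOn_setOf_equiv
  have hprod : (K : Set H) ⊆ List.prod '' {l | ∀ c ∈ l, c ∈ S} := by
    intro y hy
    have hyK : (⟨y, hy⟩ : K) ∈ Submonoid.closure _ := hgen ▸ Submonoid.mem_top _
    obtain ⟨l, hl, hly⟩ := Submonoid.exists_list_of_mem_closure hyK
    refine ⟨l.map (↑), fun c hc => ?_, by rw [← Submonoid.coe_list_prod, hly]⟩
    obtain ⟨w, hw, rfl⟩ := List.mem_map.1 hc
    obtain ⟨u, a, v, hu, ha, hv, rfl⟩ := hl w hw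
    exact ⟨a, ⟨a, ha, rfl⟩, hH.dvd2_mul_mul_of_runit hu hv a, ⟨u, v, rfl⟩⟩
  exact ((hS.partiallyWellOrderedOn_sublistForall₂ Dvd2).image_of_monotone_on
    fun _ _ _ _ h => hH.dvd2_prod_of_sublistForall₂ h).mono hprod

end IsLeftDuo

/-- Corollary 5.7. In a left duo, l.f.g.u. monoid, every non-unit
factors as a non-empty product of irreducibles of the premonoid `(H, ∣_H)`. -/
theorem stmt19 {H : Type*} [Monoid H]
    (hduo : ∀ a b : H, ∃ c : H, a * b = c * a)
    (hlfgu : ∀ x : H, RNonUnit (Dvd2 : H → H → Prop) x →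
      IsFGU (SubRel (Dvd2 : H → H → Prop) (DCSub x))) :
    ∀ x : H, ¬ IsUnit x →
      ∃ l : List H, l ≠ [] ∧ (∀ a ∈ l, RIrred (Dvd2 : H → H → Prop) a) ∧ l.prod = x := by
  have hH : IsLeftDuo H := hduo
  have hwf : WellFounded (RLt (Dvd2 : H → H → Prop)) :=
    wellFounded_rlt_dvd2 fun x hx => hH.partiallyWellOrderedOn_of_isFGU (hlfgu x hx)
  intro x hx
  exact factorable_of_wellFounded hwf x fun hu => hx (hH.isUnit_of_dvd2_one hu.1)

end FactPaper
end
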